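/- Let X be a binomial random variable with parameters 2n and 1/2, and let c be an integer with 0 < c < n. Then the variance of X conditioned on the event {n - c ≤ X ≤ n + c} is at least c/2, i.e. at least the variance of a Bin(2c, 1/2) random variable. -/

import Mathlib

/-!
Write `a k = C(2n, n - c + k)` and `b k = C(2c, k)` for `k ≤ 2c`. The ratio `a k / b k` depends
only on `|k - c|` and is nondecreasing in it, because
`C(2n, n+j+1) / C(2n, n+j) = (n-j)/(n+j+1) ≥ (c-j)/(c+j+1) = C(2c, c+j+1) / C(2c, c+j)`.
The weight `g k = (2c - 2k)² - 2c` is increasing in `|k - c|` as well, so if `t` is the largest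
ratio on `{g ≤ 0}`, then `(a k - t b k) g k ≥ 0` for every `k`. Summing,
`∑ a g ≥ t ∑ b g = 0`, the last sum vanishing because `Bin(2c, 1/2)` has variance `c/2`.
-/

open Finset

theorem sum_range_choose_mul_sq_sub_eq_zero (m : ℕ) :
    ∑ k ∈ range (m + 1), (m.choose k : ℝ) * (((m : ℝ) - 2 * k) ^ 2 - m) = 0 := by
  set H : ℕ → ℝ := fun k => m.choose k * k * (m + 1 - 2 * k)
  have telescope : ∀ k ∈ range (m + 1),
      (m.choose k : ℝ) * (((m : ℝ) - 2 * k) ^ 2 - m) = H (k + 1) - H k := by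
    intro k hk
    have hrec : (m.choose (k + 1) : ℝ) * (k + 1) = m.choose k * (m - k) := by
      rw [← Nat.cast_sub (mem_range_succ_iff.1 hk)]
      exact_mod_cast Nat.choose_succ_right_eq m k
    simp only [H]
    push_cast
    linear_combination (-(m : ℝ) + 2 * k + 1) * hrec
  rw [sum_congr rfl telescope, sum_range_sub]
  simp [H]

theorem sum_mul_nonneg_of_div_le_div {ι : Type*} {s : Finset ι} {a b g : ι → ℝ}
    (ha : ∀ i ∈ s, 0 ≤ a i) (hb : ∀ i ∈ s, 0 < b i)
    (hab : ∀ i ∈ s, ∀ j ∈ s, g i ≤ 0 → 0 < g j → a i / b i ≤ a j / b j)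
    (hbg : 0 ≤ ∑ i ∈ s, b i * g i) : 0 ≤ ∑ i ∈ s, a i * g i := by
  obtain ⟨t, ht, hdom⟩ : ∃ t ≥ 0, ∀ i ∈ s, t * (b i * g i) ≤ a i * g i := by
    by_cases hneg : (s.filter (g · ≤ 0)).Nonempty
    · obtain ⟨k, hk, hmax⟩ := exists_max_image _ (fun i => a i / b i) hneg
      rw [mem_filter] at hk
      refine ⟨a k / b k, div_nonneg (ha k hk.1) (hb k hk.1).le, fun i hi => ?_⟩
      rcases le_or_gt (g i) 0 with hgi | hgi
      · have := (div_le_iff₀ (hb i hi)).1 (hmax i (mem_filter.2 ⟨hi, hgi⟩))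
        nlinarith
      · have := (le_div_iff₀ (hb i hi)).1 (hab k hk.1 i hi hk.2 hgi)
        nlinarith
    · refine ⟨0, le_rfl, fun i hi => ?_⟩
      have hgi : 0 < g i := not_le.1 fun h => hneg ⟨i, mem_filter.2 ⟨hi, h⟩⟩
      simpa using mul_nonneg (ha i hi) hgi.le
  calc 0 ≤ t * ∑ i ∈ s, b i * g i := mul_nonneg ht hbg
    _ = ∑ i ∈ s, t * (b i * g i) := mul_sum _ _ _
    _ ≤ ∑ i ∈ s, a i * g i := sum_le_sum hdom

section CentralBinomialRatio

variable {c n : ℕ}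

theorem choose_mul_choose_succ_le (hcn : c ≤ n) (j : ℕ) :
    (2 * n).choose (n + j) * (2 * c).choose (c + j + 1) ≤
      (2 * n).choose (n + j + 1) * (2 * c).choose (c + j) := by
  have hcore : (n + j + 1) * (c - j) ≤ (n - j) * (c + j + 1) := by
    rcases le_or_gt c j with h | h
    · simp [Nat.sub_eq_zero_of_le h]
    · obtain ⟨u, rfl⟩ := Nat.exists_eq_add_of_lt h
      obtain ⟨v, rfl⟩ := Nat.exists_eq_add_of_le hcn
      simp only [show j + u + 1 - j = u + 1 by omega, show j + u + 1 + v - j = u + 1 + v by omega]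
      nlinarith
  have hc := Nat.choose_succ_right_eq (2 * c) (c + j)
  have hn := Nat.choose_succ_right_eq (2 * n) (n + j)
  rw [show 2 * c - (c + j) = c - j by omega] at hc
  rw [show 2 * n - (n + j) = n - j by omega] at hn
  refine Nat.le_of_mul_le_mul_right ?_ (Nat.mul_pos (Nat.succ_pos (n + j)) (Nat.succ_pos (c + j)))
  calc (2 * n).choose (n + j) * (2 * c).choose (c + j + 1) * ((n + j + 1) * (c + j + 1))
      = (2 * n).choose (n + j) * (2 * c).choose (c + j) * ((n + j + 1) * (c - j)) := by
        linear_combination (2 * n).choose (n + j) * (n + j + 1) * hc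
    _ ≤ (2 * n).choose (n + j) * (2 * c).choose (c + j) * ((n - j) * (c + j + 1)) :=
        Nat.mul_le_mul_left _ hcore
    _ = (2 * n).choose (n + j + 1) * (2 * c).choose (c + j) * ((n + j + 1) * (c + j + 1)) := by
        linear_combination (2 * c).choose (c + j) * (c + j + 1) * hn.symm

theorem monotoneOn_choose_div_choose (hcn : c ≤ n) :
    MonotoneOn (fun j => ((2 * n).choose (n + j) : ℝ) / (2 * c).choose (c + j)) (Set.Iic c) := by
  refine monotoneOn_of_le_succ Set.ordConnected_Iic fun j _ hj hj1 => ?_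
  rw [Order.succ_eq_add_one, Set.mem_Iic] at *
  rw [div_le_div_iff₀ (by exact_mod_cast Nat.choose_pos (by omega))
    (by exact_mod_cast Nat.choose_pos (by omega)), ← add_assoc, ← add_assoc]
  exact_mod_cast choose_mul_choose_succ_le hcn j

theorem choose_sub_add_eq_choose_add_natAbs {k : ℕ} (hcn : c ≤ n) (hk : k ≤ 2 * c) :
    (2 * n).choose (n - c + k) = (2 * n).choose (n + ((k : ℤ) - c).natAbs) := by
  rcases le_total c k with h | h
  · congr 1; omega
  · rw [← Nat.choose_symm (by omega)]; congr 1; omega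

theorem choose_div_choose_le_of_sq_lt {k l : ℕ} (hcn : c ≤ n) (hk : k ≤ 2 * c)
    (hl : l ≤ 2 * c) (hkl : ((k : ℝ) - c) ^ 2 < ((l : ℝ) - c) ^ 2) :
    ((2 * n).choose (n - c + k) : ℝ) / (2 * c).choose k ≤
      ((2 * n).choose (n - c + l) : ℝ) / (2 * c).choose l := by
  have hsymm {i : ℕ} (hi : i ≤ 2 * c) :
      (2 * c).choose i = (2 * c).choose (c + ((i : ℤ) - c).natAbs) := by
    simpa using choose_sub_add_eq_choose_add_natAbs le_rfl hi
  rw [choose_sub_add_eq_choose_add_natAbs hcn hk, choose_sub_add_eq_choose_add_natAbs hcn hl,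
    hsymm hk, hsymm hl]
  refine monotoneOn_choose_div_choose hcn (by simp; omega) (by simp; omega) ?_
  rw [sq_lt_sq] at hkl
  have hcast (i : ℕ) : ((((i : ℤ) - c).natAbs : ℕ) : ℝ) = |(i : ℝ) - c| := by
    rw [Nat.cast_natAbs]; push_cast; rfl
  exact_mod_cast (hcast k ▸ hcast l ▸ hkl).le

theorem mul_sum_choose_le_sum_choose_mul_sq (hcn : c ≤ n) :
    (c : ℝ) / 2 * ∑ k ∈ range (2 * c + 1), ((2 * n).choose (n - c + k) : ℝ) ≤
      ∑ k ∈ range (2 * c + 1), ((2 * n).choose (n - c + k) : ℝ) * ((k : ℝ) - c) ^ 2 := by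
  have hmem {k : ℕ} (hk : k ∈ range (2 * c + 1)) : k ≤ 2 * c := mem_range_succ_iff.1 hk
  have key : 0 ≤ ∑ k ∈ range (2 * c + 1),
      ((2 * n).choose (n - c + k) : ℝ) * ((((2 * c : ℕ) : ℝ) - 2 * k) ^ 2 - (2 * c : ℕ)) :=
    sum_mul_nonneg_of_div_le_div (fun _ _ => Nat.cast_nonneg _)
      (fun k hk => by exact_mod_cast Nat.choose_pos (hmem hk))
      (fun k hk l hl hgk hgl => choose_div_choose_le_of_sq_lt hcn (hmem hk) (hmem hl)
        (by push_cast at hgk hgl; nlinarith))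
      (sum_range_choose_mul_sq_sub_eq_zero (2 * c)).ge
  have hexpand : ∑ k ∈ range (2 * c + 1),
        ((2 * n).choose (n - c + k) : ℝ) * ((((2 * c : ℕ) : ℝ) - 2 * k) ^ 2 - (2 * c : ℕ)) =
      4 * (∑ k ∈ range (2 * c + 1), ((2 * n).choose (n - c + k) : ℝ) * ((k : ℝ) - c) ^ 2 -
        c / 2 * ∑ k ∈ range (2 * c + 1), ((2 * n).choose (n - c + k) : ℝ)) := by
    rw [mul_sum, ← sum_sub_distrib, mul_sum]
    exact sum_congr rfl fun k _ => by push_cast; ring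
  linarith

end CentralBinomialRatio

theorem stmt_5_general (n c : ℕ) (hcn : c < n) :
    (∑ x ∈ Finset.Icc (n - c) (n + c), ((2 * n).choose x : ℝ) * ((x : ℝ) - n) ^ 2) /
        (∑ x ∈ Finset.Icc (n - c) (n + c), ((2 * n).choose x : ℝ))
      ≥ (c : ℝ) / 2 := by
  have hreindex (f : ℕ → ℝ) :
      ∑ x ∈ Icc (n - c) (n + c), f x = ∑ k ∈ range (2 * c + 1), f (n - c + k) := by
    rw [← Ico_add_one_right_eq_Icc, sum_Ico_eq_sum_range,
      show n + c + 1 - (n - c) = 2 * c + 1 by omega]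
  have hdev (k : ℕ) : ((n - c + k : ℕ) : ℝ) - n = k - c := by
    rw [Nat.cast_add, Nat.cast_sub hcn.le]; ring
  simp only [hreindex, hdev]
  have hpos : 0 < ∑ k ∈ range (2 * c + 1), ((2 * n).choose (n - c + k) : ℝ) :=
    sum_pos (fun k hk => by
      have := mem_range_succ_iff.1 hk
      exact_mod_cast Nat.choose_pos (by omega)) nonempty_range_add_one
  rw [ge_iff_le, le_div_iff₀ hpos]
  exact mul_sum_choose_le_sum_choose_mul_sq hcn.le

/-- The conditional variance of `X ~ Bin(2n, 1/2)` given `n - c ≤ X ≤ n + c`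
(whose conditional mean is `n` by symmetry) is at least `c / 2`,
the variance of `Bin(2c, 1/2)`. -/
theorem stmt_5 (n c : ℕ) (hc : 0 < c) (hcn : c < n) :
    (∑ x ∈ Finset.Icc (n - c) (n + c), ((2 * n).choose x : ℝ) * ((x : ℝ) - n) ^ 2) /
        (∑ x ∈ Finset.Icc (n - c) (n + c), ((2 * n).choose x : ℝ))
      ≥ (c : ℝ) / 2 :=
  stmt_5_general n c hcn
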